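/- There exists an F-linear anti-automorphism ᾱ of the Kashiwara algebra 𝒦_q (i.e., an F-linear bijection with ᾱ(ab) = ᾱ(b)ᾱ(a) and ᾱ(1) = 1) which is involutive (ᾱ∘ᾱ = id) and satisfies ᾱ(γ^{±1/2}) = γ^{±1/2}, ᾱ(X(m)) = Ω(−m) and ᾱ(Ω(m)) = X(−m) for all m ∈ ℤ. -/

import Mathlib

/-!
The assignment `Ω(m) ↦ X(−m)`, `X(n) ↦ Ω(−n)`, `γ^{±1/2} ↦ γ^{±1/2}` defines an algebra map from
the free algebra into the opposite algebra `𝒦_qᵐᵒᵖ`. It respects the defining relations: it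
exchanges the `Ω`-relation at `(k, l)` with the `X`-relation at `(−l−1, −k−1)` (the latter
rescaled by `q²`), and sends the mixed relation at `(m, n)` to itself at `(−n−1, −m−1)`, using
that `γ` is central. The resulting anti-endomorphism `ᾱ` of `𝒦_q` satisfies `ᾱ ∘ ᾱ = id` because
`ᾱ ∘ ᾱ` is an algebra endomorphism fixing every generator.
-/

noncomputable section

/-- `F = ℚ(s)`, the field of rational functions over `ℚ` in the indeterminate `s`. -/
abbrev F : Type := RatFunc ℚ

/-- `q = s²`, so that `q^{1/2} = s ∈ F`. -/
def q : F := RatFunc.X ^ 2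

/-- Generators of the Kashiwara algebra `𝒦_q`: `Ω(m)`, `X(n)` (`m, n ∈ ℤ`)
and `γ^{1/2}`, `γ^{-1/2}`. -/
inductive KGen : Type
  | om : ℤ → KGen
  | xm : ℤ → KGen
  | gh : KGen
  | ghi : KGen

/-- The free `F`-algebra on the generators. -/
abbrev KFA := FreeAlgebra F KGen

/-- `Ω(m)` in the free algebra. -/
def omF (m : ℤ) : KFA := FreeAlgebra.ι F (KGen.om m)
/-- `X(n)` in the free algebra. -/
def xmF (n : ℤ) : KFA := FreeAlgebra.ι F (KGen.xm n)
/-- `γ^{1/2}` in the free algebra. -/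
def ghF : KFA := FreeAlgebra.ι F KGen.gh
/-- `γ^{-1/2}` in the free algebra. -/
def ghiF : KFA := FreeAlgebra.ι F KGen.ghi
/-- `γ = (γ^{1/2})²` in the free algebra. -/
def gaF : KFA := ghF * ghF

/-- The defining relations of the Kashiwara algebra `𝒦_q`. -/
inductive KRel : KFA → KFA → Prop
  /- `γ^{1/2}` is central -/
  | central_gh (x : KGen) : KRel (ghF * FreeAlgebra.ι F x) (FreeAlgebra.ι F x * ghF)
  /- `γ^{-1/2}` is central -/
  | central_ghi (x : KGen) : KRel (ghiF * FreeAlgebra.ι F x) (FreeAlgebra.ι F x * ghiF)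
  /- `γ^{1/2}γ^{-1/2} = 1` -/
  | ginv : KRel (ghF * ghiF) 1
  /- `γ^{-1/2}γ^{1/2} = 1` -/
  | ginv' : KRel (ghiF * ghF) 1
  /- `q²γΩ(m)X(n+1) − Ω(m+1)X(n)
       = (q²γ − 1)δ_{m,−n−1}·1 + γX(n+1)Ω(m) − q²X(n)Ω(m+1)` -/
  | rel1 (m n : ℤ) :
      KRel (q ^ 2 • (gaF * omF m * xmF (n + 1)) - omF (m + 1) * xmF n)
        ((if m = -n - 1 then q ^ 2 • gaF - 1 else 0) + gaF * xmF (n + 1) * omF m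
          - q ^ 2 • (xmF n * omF (m + 1)))
  /- `q²Ω(k+1)Ω(l) − Ω(l)Ω(k+1) = Ω(k)Ω(l+1) − q²Ω(l+1)Ω(k)` -/
  | rel2 (k l : ℤ) :
      KRel (q ^ 2 • (omF (k + 1) * omF l) - omF l * omF (k + 1))
        (omF k * omF (l + 1) - q ^ 2 • (omF (l + 1) * omF k))
  /- `X(k+1)X(l) − q⁻²X(l)X(k+1) = q⁻²X(k)X(l+1) − X(l+1)X(k)` -/
  | rel3 (k l : ℤ) :
      KRel (xmF (k + 1) * xmF l - (q ^ 2)⁻¹ • (xmF l * xmF (k + 1)))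
        ((q ^ 2)⁻¹ • (xmF k * xmF (l + 1)) - xmF (l + 1) * xmF k)

/-- The Kashiwara algebra `𝒦_q`. -/
abbrev Kq := RingQuot KRel

/-- `Ω(m) ∈ 𝒦_q`. -/
def Om (m : ℤ) : Kq := RingQuot.mkAlgHom F KRel (omF m)
/-- `X(n) ∈ 𝒦_q`. -/
def Xm (n : ℤ) : Kq := RingQuot.mkAlgHom F KRel (xmF n)
/-- `γ^{1/2} ∈ 𝒦_q`. -/
def Gh : Kq := RingQuot.mkAlgHom F KRel ghF
/-- `γ^{-1/2} ∈ 𝒦_q`. -/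
def Ghi : Kq := RingQuot.mkAlgHom F KRel ghiF

/-- The left ideal `I = ∑_{k∈ℤ} 𝒦_q·Ω(k)`. -/
def Iq : Submodule Kq Kq := Submodule.span Kq (Set.range Om)

/-- `M = 𝒦_q/I`, a left `𝒦_q`-module. -/
abbrev Mq := Kq ⧸ Iq

/-- The image `1̄` of `1` in `M`. -/
def oneM : Mq := Submodule.Quotient.mk 1

open MulOpposite

lemma q_ne_zero : q ≠ 0 := pow_ne_zero 2 RatFunc.X_ne_zero

def KGen.swap : KGen → KGen
  | .om m => .xm (-m)
  | .xm n => .om (-n)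
  | .gh => .gh
  | .ghi => .ghi

lemma KGen.swap_involutive : Function.Involutive KGen.swap := by
  rintro (m | n | _ | _) <;> simp [KGen.swap]

lemma smul_sub_eq_sub_smul_iff {K M : Type*} [Field K] [AddCommGroup M] [Module K M] {c : K}
    (hc : c ≠ 0) {a b d e : M} : c • a - b = d - c • e ↔ a - c⁻¹ • b = c⁻¹ • d - e := by
  rw [← smul_right_inj (inv_ne_zero hc)]
  simp only [smul_sub, smul_smul, inv_mul_cancel₀ hc, one_smul]

namespace Kq

abbrev gen (g : KGen) : Kq := RingQuot.mkAlgHom F KRel (FreeAlgebra.ι F g)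

lemma commute_Gh_gen (g : KGen) : Commute Gh (gen g) := by
  simpa [Commute, SemiconjBy, Gh, ghF] using RingQuot.mkAlgHom_rel F (KRel.central_gh g)

lemma commute_Ghi_gen (g : KGen) : Commute Ghi (gen g) := by
  simpa [Commute, SemiconjBy, Ghi, ghiF] using RingQuot.mkAlgHom_rel F (KRel.central_ghi g)

lemma Gh_mul_Ghi : Gh * Ghi = 1 := by
  simpa [Gh, Ghi, ghF, ghiF] using RingQuot.mkAlgHom_rel F KRel.ginv

lemma Ghi_mul_Gh : Ghi * Gh = 1 := by
  simpa [Gh, Ghi, ghF, ghiF] using RingQuot.mkAlgHom_rel F KRel.ginv'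

lemma commute_gamma_gen (g : KGen) : Commute (Gh * Gh) (gen g) :=
  (commute_Gh_gen g).mul_left (commute_Gh_gen g)

lemma commute_gamma_Om_mul_Xm (m n : ℤ) : Commute (Gh * Gh) (Om m * Xm n) :=
  (commute_gamma_gen (.om m)).mul_right (commute_gamma_gen (.xm n))

lemma commute_gamma_Xm_mul_Om (m n : ℤ) : Commute (Gh * Gh) (Xm m * Om n) :=
  (commute_gamma_gen (.xm m)).mul_right (commute_gamma_gen (.om n))

lemma Om_Xm_rel (m n : ℤ) :
    q ^ 2 • (Gh * Gh * Om m * Xm (n + 1)) - Om (m + 1) * Xm n =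
      (if m = -n - 1 then q ^ 2 • (Gh * Gh) - 1 else 0) + Gh * Gh * Xm (n + 1) * Om m
        - q ^ 2 • (Xm n * Om (m + 1)) := by
  simpa [Om, Xm, Gh, gaF, apply_ite] using RingQuot.mkAlgHom_rel F (KRel.rel1 m n)

lemma Om_rel (k l : ℤ) :
    q ^ 2 • (Om (k + 1) * Om l) - Om l * Om (k + 1) =
      Om k * Om (l + 1) - q ^ 2 • (Om (l + 1) * Om k) := by
  simpa [Om] using RingQuot.mkAlgHom_rel F (KRel.rel2 k l)

lemma Xm_rel (k l : ℤ) :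
    Xm (k + 1) * Xm l - (q ^ 2)⁻¹ • (Xm l * Xm (k + 1)) =
      (q ^ 2)⁻¹ • (Xm k * Xm (l + 1)) - Xm (l + 1) * Xm k := by
  simpa [Xm] using RingQuot.mkAlgHom_rel F (KRel.rel3 k l)

def antiF : KFA →ₐ[F] Kqᵐᵒᵖ := FreeAlgebra.lift F fun g => op (gen g.swap)

lemma antiF_ι (g : KGen) : antiF (FreeAlgebra.ι F g) = op (gen g.swap) := by
  simp [antiF]

@[simp] lemma antiF_omF (m : ℤ) : antiF (omF m) = op (Xm (-m)) := antiF_ι _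
@[simp] lemma antiF_xmF (n : ℤ) : antiF (xmF n) = op (Om (-n)) := antiF_ι _
@[simp] lemma antiF_ghF : antiF ghF = op Gh := antiF_ι _
@[simp] lemma antiF_ghiF : antiF ghiF = op Ghi := antiF_ι _

lemma antiF_rel ⦃x y : KFA⦄ (h : KRel x y) : antiF x = antiF y := by
  have hq : q ^ 2 ≠ 0 := pow_ne_zero 2 q_ne_zero
  apply unop_injective
  cases h with
  | central_gh g => simpa [antiF_ι] using (commute_Gh_gen g.swap).eq.symm
  | central_ghi g => simpa [antiF_ι] using (commute_Ghi_gen g.swap).eq.symm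
  | ginv => simpa using Ghi_mul_Gh
  | ginv' => simpa using Gh_mul_Ghi
  | rel1 m n =>
    have key := Om_Xm_rel (-n - 1) (-m - 1)
    have hcond : -n - 1 = -(-m - 1) - 1 ↔ m = -n - 1 := by omega
    simp only [sub_add_cancel, hcond] at key
    simp only [gaF, map_sub, map_add, map_mul, map_smul, map_one, map_zero, apply_ite antiF,
      apply_ite unop, antiF_omF, antiF_xmF, antiF_ghF, unop_sub, unop_add, unop_mul, unop_smul,
      unop_op, unop_one, unop_zero, neg_add']
    rw [mul_assoc (Gh * Gh), (commute_gamma_Om_mul_Xm _ _).eq, mul_assoc (Gh * Gh),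
      (commute_gamma_Xm_mul_Om _ _).eq] at key
    simpa only [mul_assoc] using key
  | rel2 k l =>
    have key := Xm_rel (-l - 1) (-k - 1)
    simp only [sub_add_cancel] at key
    simp only [map_sub, map_mul, map_smul, antiF_omF, unop_sub, unop_mul, unop_smul, unop_op,
      neg_add']
    exact (smul_sub_eq_sub_smul_iff hq).2 key
  | rel3 k l =>
    have key := Om_rel (-l - 1) (-k - 1)
    simp only [sub_add_cancel] at key
    simp only [map_sub, map_mul, map_smul, antiF_xmF, unop_sub, unop_mul, unop_smul, unop_op,
      neg_add']
    exact (smul_sub_eq_sub_smul_iff hq).1 key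

def antiHom : Kq →ₐ[F] Kqᵐᵒᵖ := RingQuot.liftAlgHom F ⟨antiF, antiF_rel⟩

lemma antiHom_gen (g : KGen) : antiHom (gen g) = op (gen g.swap) := by
  simp [antiHom, antiF_ι]

def anti (a : Kq) : Kq := unop (antiHom a)

lemma anti_add (a b : Kq) : anti (a + b) = anti a + anti b := by simp [anti]
lemma anti_smul (c : F) (a : Kq) : anti (c • a) = c • anti a := by simp [anti]
lemma anti_mul (a b : Kq) : anti (a * b) = anti b * anti a := by simp [anti]
lemma anti_one : anti 1 = 1 := by simp [anti]

lemma anti_gen (g : KGen) : anti (gen g) = gen g.swap := by simp [anti, antiHom_gen]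

lemma anti_Gh : anti Gh = Gh := anti_gen .gh
lemma anti_Ghi : anti Ghi = Ghi := anti_gen .ghi
lemma anti_Xm (m : ℤ) : anti (Xm m) = Om (-m) := anti_gen (.xm m)
lemma anti_Om (m : ℤ) : anti (Om m) = Xm (-m) := anti_gen (.om m)

lemma anti_involutive : Function.Involutive anti := by
  suffices (AlgHom.opComm antiHom).comp antiHom = AlgHom.id F Kq from
    fun a => AlgHom.congr_fun this a
  ext g
  simpa [antiHom_gen] using congrArg gen (KGen.swap_involutive g)

end Kq

/-- There exists an involutive `F`-linear anti-automorphism `ᾱ` of `𝒦_q` with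
`ᾱ(γ^{±1/2}) = γ^{±1/2}`, `ᾱ(X(m)) = Ω(−m)` and `ᾱ(Ω(m)) = X(−m)` for all `m ∈ ℤ`. -/
theorem stmt4 :
    ∃ α : Kq → Kq,
      Function.Bijective α ∧
      (∀ a b : Kq, α (a + b) = α a + α b) ∧
      (∀ (c : F) (a : Kq), α (c • a) = c • α a) ∧
      (∀ a b : Kq, α (a * b) = α b * α a) ∧
      α 1 = 1 ∧
      (∀ a : Kq, α (α a) = a) ∧
      α Gh = Gh ∧
      α Ghi = Ghi ∧
      (∀ m : ℤ, α (Xm m) = Om (-m)) ∧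
      (∀ m : ℤ, α (Om m) = Xm (-m)) :=
  ⟨Kq.anti, Kq.anti_involutive.bijective, Kq.anti_add, Kq.anti_smul, Kq.anti_mul, Kq.anti_one,
    Kq.anti_involutive, Kq.anti_Gh, Kq.anti_Ghi, Kq.anti_Xm, Kq.anti_Om⟩
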